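/- Let k be a field of characteristic 0 and let K be a finitely generated field extension of k of transcendence degree d, such that k is relatively algebraically closed in K. Then there exists a rational plurifibration of K over k, i.e. a chain of intermediate fields K = K_0 ⊇ K_1 ⊇ ⋯ ⊇ K_d = k such that for each i the extension K_i / K_{i+1} has transcendence degree 1 and K_{i+1} is relatively algebraically closed in K_i; moreover each K_i is finitely generated over k. -/

import Mathlib

/-!
Fix a transcendence basis `b₀, …, b_{d-1}` of `K/k` and let `K_i` be the relative algebraic
closure in `K` of `k(b_i, …, b_{d-1})`. Relative algebraic closures are relatively algebraically
closed, `K_0 = K` because `K` is algebraic over `k(b)`, and `K_d = k` by hypothesis. The element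
`b_i` stays transcendental over the algebraic extension `K_{i+1}` of `k(b_{i+1}, …)`, and `K_i`
is algebraic over `K_{i+1}(b_i) ⊇ k(b_i, …)`.

Finite generation goes down the chain: writing `E = k(b_{i+1}, …)`, an `E`-linearly
independent family in `K_{i+1}` stays linearly independent over `E(b_i)`, because `b_i` is
transcendental over `K_{i+1}`. It therefore lives in the extension of `E(b_i)` generated by the
finitely many (algebraic) generators of `K_i`, which is finite; so `K_{i+1}/E` is finite and
`K_{i+1}` is finitely generated over `k`.
-/

open Polynomial IntermediateField

section

variable {K : Type*} [Field K]

theorem IsAlgebraic.extendScalars_of_toSubfield_le {kA kB : Type*} [Field kA] [Field kB]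
    [Algebra kA K] [Algebra kB K] {A : IntermediateField kA K} {B : IntermediateField kB K}
    (hAB : A.toSubfield ≤ B.toSubfield) {x : K} (hx : IsAlgebraic A x) : IsAlgebraic B x :=
  hx.ringHom_of_comp_eq (Subfield.inclusion hAB) (RingHom.id K)
    (Subfield.inclusion hAB).injective rfl

theorem IsAlgebraic.restrictScalars_of_toSubfield_le {kA kB : Type*} [Field kA] [Field kB]
    [Algebra kA K] [Algebra kB K] {A : IntermediateField kA K} {B : IntermediateField kB K}
    (hAB : A.toSubfield ≤ B.toSubfield) (hB : ∀ y ∈ B, IsAlgebraic A y) {x : K}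
    (hx : IsAlgebraic B x) : IsAlgebraic A x := by
  let _ : Algebra A B := (Subfield.inclusion hAB).toAlgebra
  have : IsScalarTower A B K := .of_algebraMap_eq fun _ ↦ rfl
  have : Algebra.IsAlgebraic A B :=
    ⟨fun y ↦ (isAlgebraic_algebraMap_iff (algebraMap B K).injective).mp (hB y y.2)⟩
  exact hx.restrictScalars A

theorem LinearIndependent.algebraAdjoin_of_transcendental {E : Type*} [Field E] [Algebra E K]
    {W : IntermediateField E K} {t : K} (ht : Transcendental W t) {ι : Type*} {v : ι → W}
    (hv : LinearIndependent E v) :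
    LinearIndependent (Algebra.adjoin E {t}) fun i ↦ (v i : K) := by
  rw [linearIndependent_iff'] at hv ⊢
  intro s g hg i hi
  have hpoly : ∀ j, ∃ p : E[X], aeval t p = (g j : K) := fun j ↦ by
    simpa [Algebra.adjoin_singleton_eq_range_aeval] using (g j).2
  choose p hp using hpoly
  -- the relation `∑ g_j v_j = 0` is a polynomial over `W` vanishing at `t`
  set q : W[X] := ∑ j ∈ s, (p j).map (algebraMap E W) * C (v j)
  have hq : q = 0 := by
    refine transcendental_iff.mp ht q ?_
    simp only [q, map_sum, map_mul, aeval_C, aeval_map_algebraMap, hp]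
    simpa [Algebra.smul_def] using hg
  have hcoeff : ∀ n, ∀ j ∈ s, (p j).coeff n = 0 := fun n ↦ by
    refine hv s (fun j ↦ (p j).coeff n) ?_
    simpa [q, finsetSum_coeff, coeff_mul_C, Algebra.smul_def] using congrArg (coeff · n) hq
  have hpi : p i = 0 := Polynomial.ext fun n ↦ by simpa using hcoeff n i hi
  exact Subtype.ext (by simp [← hp i, hpi])

open scoped IntermediateField.algebraAdjoinAdjoin in
theorem LinearIndependent.adjoin_of_transcendental {E : Type*} [Field E] [Algebra E K]
    {W : IntermediateField E K} {t : K} (ht : Transcendental W t) {ι : Type*} {v : ι → W}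
    (hv : LinearIndependent E v) :
    LinearIndependent E⟮t⟯ fun i ↦ (v i : K) :=
  (hv.algebraAdjoin_of_transcendental ht).localization E⟮t⟯
    (nonZeroDivisors (Algebra.adjoin E {t}))

namespace IntermediateField

theorem finiteDimensional_of_transcendental {E : Type*} [Field E] [Algebra E K]
    {W : IntermediateField E K} {t : K} (ht : Transcendental W t)
    {M : IntermediateField E⟮t⟯ K} [FiniteDimensional E⟮t⟯ M] (hWM : ∀ x ∈ W, x ∈ M) :
    FiniteDimensional E W := by
  let B := Module.Basis.ofVectorSpace E W
  have hB : LinearIndependent E⟮t⟯ fun i ↦ (⟨B i, hWM _ (B i).2⟩ : M) :=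
    .of_comp M.val.toLinearMap (B.linearIndependent.adjoin_of_transcendental ht)
  have := hB.finite
  exact Module.Finite.of_basis B

variable {k : Type*} [Field k] [Algebra k K]

theorem fg_of_fg_of_finiteDimensional {E W : IntermediateField k K} (hEW : E ≤ W) (hE : E.FG)
    [FiniteDimensional E (extendScalars hEW)] : W.FG := by
  obtain ⟨S, hS⟩ := (extendScalars hEW).fg_of_fg_toSubalgebra
    (Subalgebra.fg_of_fg_toSubmodule ((Submodule.fg_iff_finiteDimensional _).mpr ‹_›))
  rw [← extendScalars_restrictScalars hEW, ← hS, restrictScalars_adjoin_eq_sup]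
  exact fg_sup hE (fg_adjoin_finset S)

theorem fg_of_transcendental {E W N : IntermediateField k K} (hEW : E ≤ W) (hE : E.FG)
    (hWN : W ≤ N) (hN : N.FG) {t : K} (ht : Transcendental W t)
    (halg : ∀ x ∈ N, IsAlgebraic E⟮t⟯ x) : W.FG := by
  obtain ⟨S, rfl⟩ := hN
  have : FiniteDimensional E⟮t⟯ (adjoin E⟮t⟯ (S : Set K)) :=
    finiteDimensional_adjoin fun x hx ↦ (halg x (subset_adjoin k _ hx)).isIntegral
  have hNM : adjoin k (S : Set K) ≤
      ((adjoin E⟮t⟯ (S : Set K)).restrictScalars E).restrictScalars k :=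
    adjoin_le_iff.mpr (subset_adjoin _ _)
  have : FiniteDimensional E (extendScalars hEW) :=
    finiteDimensional_of_transcendental (fun h ↦ ht (h.extendScalars_of_toSubfield_le le_rfl))
      fun x hx ↦ hNM (hWN hx)
  exact fg_of_fg_of_finiteDimensional hEW hE

def relAlgClosure (L : IntermediateField k K) : IntermediateField k K :=
  (algebraicClosure L K).restrictScalars k

section relAlgClosure

variable {L L' : IntermediateField k K} {x : K}

theorem mem_relAlgClosure : x ∈ relAlgClosure L ↔ IsAlgebraic L x :=
  mem_algebraicClosure_iff

theorem le_relAlgClosure (L : IntermediateField k K) : L ≤ relAlgClosure L :=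
  fun x hx ↦ mem_relAlgClosure.mpr (isAlgebraic_algebraMap (⟨x, hx⟩ : L))

theorem relAlgClosure_mono (h : L ≤ L') : relAlgClosure L ≤ relAlgClosure L' :=
  fun _ hx ↦ mem_relAlgClosure.mpr ((mem_relAlgClosure.mp hx).extendScalars_of_toSubfield_le h)

theorem isAlgebraic_relAlgClosure_iff : IsAlgebraic (relAlgClosure L) x ↔ IsAlgebraic L x :=
  ⟨(·.restrictScalars_of_toSubfield_le (le_relAlgClosure L) fun _ ↦ mem_relAlgClosure.mp),
    (·.extendScalars_of_toSubfield_le (le_relAlgClosure L))⟩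

theorem mem_relAlgClosure_of_isAlgebraic (hx : IsAlgebraic (relAlgClosure L) x) :
    x ∈ relAlgClosure L :=
  mem_relAlgClosure.mpr (isAlgebraic_relAlgClosure_iff.mp hx)

theorem relAlgClosure_eq_top [Algebra.IsAlgebraic L K] : relAlgClosure L = ⊤ :=
  eq_top_iff.mpr fun x _ ↦ mem_relAlgClosure.mpr (Algebra.IsAlgebraic.isAlgebraic x)

theorem relAlgClosure_bot (h : ∀ x : K, IsAlgebraic k x → x ∈ (⊥ : IntermediateField k K)) :
    relAlgClosure (⊥ : IntermediateField k K) = ⊥ :=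
  eq_bot_iff.mpr fun x hx ↦ h x ((mem_relAlgClosure.mp hx).restrictScalars k)

end relAlgClosure

section adjoinTail

variable (k) {d : ℕ} (b : Fin d → K)

/-- `k(b_j : j ≥ i)`; the index runs over `Fin (d + 1)` so that `i = d` gives `k`. -/
def adjoinTail (i : Fin (d + 1)) : IntermediateField k K :=
  adjoin k (b '' {j | i ≤ j.castSucc})

theorem adjoinTail_zero : adjoinTail k b 0 = adjoin k (Set.range b) := by
  simp [adjoinTail]

theorem adjoinTail_last : adjoinTail k b (Fin.last d) = ⊥ := by
  simp [adjoinTail]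

theorem adjoinTail_antitone : Antitone (adjoinTail k b) :=
  fun _ _ hij ↦ adjoin.mono _ _ _ (Set.image_mono fun _ hl ↦ hij.trans hl)

theorem adjoinTail_fg (i : Fin (d + 1)) : (adjoinTail k b i).FG :=
  fg_adjoin_of_finite ((Set.toFinite _).image b)

variable {k b}

theorem transcendental_adjoinTail_succ (hb : AlgebraicIndependent k b) (i : Fin d) :
    Transcendental (adjoinTail k b i.succ) (b i) :=
  transcendental_adjoin_iff.mpr (hb.transcendental_adjoin (by simp))

theorem adjoinTail_castSucc_le {i : Fin d} {L : IntermediateField k K}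
    (hL : adjoinTail k b i.succ ≤ L) :
    adjoinTail k b i.castSucc ≤ (adjoin L {b i}).restrictScalars k := by
  refine adjoin_le_iff.mpr ?_
  rintro _ ⟨j, hj, rfl⟩
  rcases (Fin.castSucc_le_castSucc_iff.mp hj).eq_or_lt with rfl | hij
  · exact mem_adjoin_simple_self L _
  · have hj : b j ∈ adjoinTail k b i.succ :=
      subset_adjoin _ _ ⟨j, Fin.succ_le_castSucc_iff.mpr hij, rfl⟩
    exact algebraMap_mem _ (⟨b j, hL hj⟩ : L)

theorem isAlgebraic_adjoin_of_mem_relAlgClosure {i : Fin d} {L : IntermediateField k K}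
    (hL : adjoinTail k b i.succ ≤ L) {x : K}
    (hx : x ∈ relAlgClosure (adjoinTail k b i.castSucc)) : IsAlgebraic L⟮b i⟯ x :=
  (mem_relAlgClosure.mp hx).extendScalars_of_toSubfield_le (adjoinTail_castSucc_le hL)

end adjoinTail

end IntermediateField

end

theorem plurifibration_exists_general
    (k K : Type*) [Field k] [Field K] [Algebra k K]
    (d : ℕ)
    (hfg : (⊤ : IntermediateField k K).FG)
    (htd : ∃ b : Fin d → K, IsTranscendenceBasis k b)
    (hrac : ∀ x : K, IsAlgebraic k x → x ∈ (⊥ : IntermediateField k K)) :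
    ∃ F : Fin (d + 1) → IntermediateField k K,
      F 0 = ⊤ ∧
      F (Fin.last d) = ⊥ ∧
      (∀ i j : Fin (d + 1), i ≤ j → F j ≤ F i) ∧
      (∀ i : Fin (d + 1), (F i).FG) ∧
      (∀ i : Fin d,
        -- the extension `K_i / K_{i+1}` has transcendence degree 1:
        (∃ t : K, t ∈ F i.castSucc ∧ Transcendental (↥(F i.succ)) t ∧
          ∀ x : K, x ∈ F i.castSucc →
            IsAlgebraic (↥(IntermediateField.adjoin (↥(F i.succ)) ({t} : Set K))) x) ∧
        -- `K_{i+1}` is relatively algebraically closed in `K_i`: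
        (∀ x : K, x ∈ F i.castSucc → IsAlgebraic (↥(F i.succ)) x → x ∈ F i.succ)) := by
  obtain ⟨b, hb⟩ := htd
  let F i := relAlgClosure (adjoinTail k b i)
  have hanti : ∀ i j, i ≤ j → F j ≤ F i :=
    fun _ _ hij ↦ relAlgClosure_mono (adjoinTail_antitone k b hij)
  have htop : F 0 = ⊤ := by
    have := hb.isAlgebraic_field
    simp only [F, adjoinTail_zero]
    exact relAlgClosure_eq_top
  have htrans (i : Fin d) : Transcendental (F i.succ) (b i) :=
    fun h ↦ transcendental_adjoinTail_succ hb.1 i (isAlgebraic_relAlgClosure_iff.mp h)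
  have hfgF (i : Fin (d + 1)) : (F i).FG := by
    induction i using Fin.induction with
    | zero => exact htop ▸ hfg
    | succ i ih =>
      exact fg_of_transcendental (le_relAlgClosure _) (adjoinTail_fg k b _)
        (hanti _ _ i.castSucc_le_succ) ih (htrans i)
        fun x hx ↦ isAlgebraic_adjoin_of_mem_relAlgClosure le_rfl hx
  refine ⟨F, htop, ?_, hanti, hfgF, fun i ↦ ⟨⟨b i, ?_, htrans i, fun x hx ↦ ?_⟩,
    fun x _ hx ↦ mem_relAlgClosure_of_isAlgebraic hx⟩⟩
  · simpa only [F, adjoinTail_last] using relAlgClosure_bot hrac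
  · exact le_relAlgClosure _ (subset_adjoin _ _ ⟨i, le_refl i.castSucc, rfl⟩)
  · exact isAlgebraic_adjoin_of_mem_relAlgClosure (le_relAlgClosure _) hx

/-- Let `k` be a field of characteristic 0 and `K` a finitely
generated field extension of `k` of transcendence degree `d`, with `k`
relatively algebraically closed in `K`.  Then there is a rational
plurifibration of `K` over `k`: a chain of intermediate fields
`K = K₀ ⊇ K₁ ⊇ ⋯ ⊇ K_d = k` such that each step `K_i / K_{i+1}` has
transcendence degree 1 (i.e. there is `t ∈ K_i` transcendental over `K_{i+1}`
with `K_i` algebraic over `K_{i+1}(t)`), each `K_{i+1}` is relatively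
algebraically closed in `K_i`, and each `K_i` is finitely generated over `k`. -/
theorem plurifibration_exists
    (k K : Type*) [Field k] [Field K] [Algebra k K] [CharZero k]
    (d : ℕ)
    (hfg : (⊤ : IntermediateField k K).FG)
    (htd : ∃ b : Fin d → K, IsTranscendenceBasis k b)
    (hrac : ∀ x : K, IsAlgebraic k x → x ∈ (⊥ : IntermediateField k K)) :
    ∃ F : Fin (d + 1) → IntermediateField k K,
      F 0 = ⊤ ∧
      F (Fin.last d) = ⊥ ∧
      (∀ i j : Fin (d + 1), i ≤ j → F j ≤ F i) ∧
      (∀ i : Fin (d + 1), (F i).FG) ∧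
      (∀ i : Fin d,
        -- the extension `K_i / K_{i+1}` has transcendence degree 1:
        (∃ t : K, t ∈ F i.castSucc ∧ Transcendental (↥(F i.succ)) t ∧
          ∀ x : K, x ∈ F i.castSucc →
            IsAlgebraic (↥(IntermediateField.adjoin (↥(F i.succ)) ({t} : Set K))) x) ∧
        -- `K_{i+1}` is relatively algebraically closed in `K_i`:
        (∀ x : K, x ∈ F i.castSucc → IsAlgebraic (↥(F i.succ)) x → x ∈ F i.succ)) :=
  plurifibration_exists_general k K d hfg htd hrac
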